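/- There exists a two-step reachability game in which some state q0 is not in W(n) for any natural number n, yet every state reachable from q0 in one step lies in W(n) for some natural number n; hence the finite-stage union W(ω) is not closed under the one-step verifier operator, i.e., W(ω) ⊊ W(ω+1). -/

import Mathlib

/-- A two-step reachability game: states `S`, for each state a nonempty type
of verifier moves, for each move a nonempty type of falsifier responses,
an outcome function `o`, and a target set `T`. -/
structure Game where
  S : Type
  M : S → Type
  M_ne : ∀ q, Nonempty (M q)
  B : (q : S) → M q → Type
  B_ne : ∀ q a, Nonempty (B q a)
  o : (q : S) → (a : M q) → B q a → S
  T : Set S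

/-- The one-step verifier operator `F(X) = T ∪ { q | ∃ a ∈ M(q), ∀ b, o(q,a,b) ∈ X }`. -/
def Game.step (G : Game) (X : Set G.S) : Set G.S :=
  G.T ∪ { q | ∃ a : G.M q, ∀ b : G.B q a, G.o q a b ∈ X }

/-- The winning-region iteration: `W 0 = T`, `W (γ+1) = step (W γ)`,
and `W λ = ⋃_{γ<λ} W γ` for limit `λ`. -/
noncomputable def Game.W (G : Game) (γ : Ordinal.{0}) : Set G.S :=
  Ordinal.limitRecOn γ G.T (fun _ X => G.step X)
    (fun δ _ ih => ⋃ x : { β : Ordinal.{0} // β < δ }, ih x.1 x.2)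

/-- The rank of a state: the least ordinal `γ` with `q ∈ W γ`
(meaningful when such an ordinal exists). -/
noncomputable def Game.rank (G : Game) (q : G.S) : Ordinal.{0} :=
  sInf { γ | q ∈ G.W γ }

/-!
The state `q0` has a falsifier response leading to `(i, 0)` for every `i`, and `(i, 0)` reaches
the target only after `i` steps. So each successor of `q0` is won at a finite stage, but with no
common bound, and `q0` enters the winning region exactly at stage `ω + 1`.
-/

namespace Game

variable (G : Game)

theorem mem_step {X : Set G.S} {q : G.S} :
    q ∈ G.step X ↔ q ∈ G.T ∨ ∃ a : G.M q, ∀ b : G.B q a, G.o q a b ∈ X :=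
  Iff.rfl

theorem step_mono {X Y : Set G.S} (h : X ⊆ Y) : G.step X ⊆ G.step Y :=
  Set.union_subset_union_right _ fun _ ⟨a, ha⟩ => ⟨a, fun b => h (ha b)⟩

theorem W_zero : G.W 0 = G.T :=
  Ordinal.limitRecOn_zero _ _ _

theorem W_succ (γ : Ordinal.{0}) : G.W (γ + 1) = G.step (G.W γ) :=
  Ordinal.limitRecOn_add_one _ _ _ _

theorem W_natCast_succ (n : ℕ) : G.W ((n + 1 : ℕ) : Ordinal.{0}) = G.step (G.W n) := by
  rw [Nat.cast_succ, W_succ]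

theorem W_omega0 : G.W Ordinal.omega0 = ⋃ n : ℕ, G.W n := by
  rw [W, Ordinal.limitRecOn_limit _ _ _ _ Ordinal.isSuccLimit_omega0]
  ext q
  simp only [Set.mem_iUnion, Subtype.exists, Ordinal.lt_omega0]
  exact ⟨fun ⟨_, ⟨n, rfl⟩, hq⟩ => ⟨n, hq⟩, fun ⟨n, hq⟩ => ⟨n, ⟨n, rfl⟩, hq⟩⟩

theorem W_natCast_subset_succ (n : ℕ) : G.W n ⊆ G.W ((n + 1 : ℕ) : Ordinal.{0}) := by
  induction n with
  | zero =>
    rw [W_natCast_succ, Nat.cast_zero, W_zero]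
    exact Set.subset_union_left
  | succ n ih => rw [W_natCast_succ, W_natCast_succ]; exact G.step_mono ih

theorem W_omega0_subset_succ : G.W Ordinal.omega0 ⊆ G.W (Ordinal.omega0 + 1) := by
  rw [W_succ, W_omega0]
  refine Set.iUnion_subset fun n => (G.W_natCast_subset_succ n).trans ?_
  rw [W_natCast_succ]
  exact G.step_mono (Set.subset_iUnion (fun n : ℕ => G.W n) n)

theorem W_omega0_ssubset_succ {q : G.S} (hq : ∀ n : ℕ, q ∉ G.W n)
    (hsucc : ∀ a b, ∃ n : ℕ, G.o q a b ∈ G.W n) :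
    G.W Ordinal.omega0 ⊂ G.W (Ordinal.omega0 + 1) := by
  obtain ⟨a⟩ := G.M_ne q
  have hq_succ : q ∈ G.W (Ordinal.omega0 + 1) := by
    rw [W_succ, W_omega0]
    exact Or.inr ⟨a, fun b => Set.mem_iUnion.mpr (hsucc a b)⟩
  have hq_omega0 : q ∉ G.W Ordinal.omega0 := by
    simpa only [W_omega0, Set.mem_iUnion, not_exists] using hq
  exact (Set.ssubset_iff_of_subset G.W_omega0_subset_succ).mpr ⟨q, hq_succ, hq_omega0⟩

end Game

/-- The game of the statement on `{q0} ∪ ℕ × ℕ`, with `q0 = none`. Every state offers the falsifier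
the responses `ℕ`; only at `q0` do they matter. -/
abbrev ladderGame : Game where
  S := Option (ℕ × ℕ)
  M _ := Unit
  M_ne _ := ⟨()⟩
  B _ _ := ℕ
  B_ne _ _ := ⟨0⟩
  o q _ i := q.elim (some (i, 0)) fun p => some (p.1, p.2 + 1)
  T := Set.range fun i => some (i, i)

namespace ladderGame

theorem mem_T_iff {i j : ℕ} : (some (i, j) : ladderGame.S) ∈ ladderGame.T ↔ i = j := by
  simp [ladderGame]

theorem some_mem_step_iff {X : Set ladderGame.S} {i j : ℕ} :
    (some (i, j) : ladderGame.S) ∈ ladderGame.step X ↔ i = j ∨ some (i, j + 1) ∈ X :=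
  or_congr mem_T_iff ⟨fun ⟨_, h⟩ => h 0, fun h => ⟨(), fun _ => h⟩⟩

theorem some_mem_W_iff (n i j : ℕ) :
    (some (i, j) : ladderGame.S) ∈ ladderGame.W n ↔ j ≤ i ∧ i ≤ j + n := by
  induction n generalizing j with
  | zero =>
    rw [Nat.cast_zero, Game.W_zero, mem_T_iff]
    omega
  | succ n ih =>
    rw [Game.W_natCast_succ, some_mem_step_iff, ih]
    omega

theorem none_notMem_W (n : ℕ) : (none : ladderGame.S) ∉ ladderGame.W n := by
  cases n with
  | zero => simp [Game.W_zero, ladderGame]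
  | succ n =>
    rw [Game.W_natCast_succ, Game.mem_step]
    rintro (⟨_, ⟨⟩⟩ | ⟨_, h⟩)
    have := (some_mem_W_iff n (n + 1) 0).mp (h (n + 1))
    omega

theorem o_none_mem_W (a : Unit) (i : ℕ) : ladderGame.o none a i ∈ ladderGame.W i :=
  (some_mem_W_iff i i 0).mpr (by omega)

end ladderGame

/-- There is a game with a state `q0` not in `W n` for any `n < ω`, while every
one-step successor of `q0` lies in some `W n` with `n < ω`; hence
`W ω ⊊ W (ω+1)`. -/
theorem finite_stages_not_closed :
    ∃ (G : Game) (q0 : G.S),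
      (∀ n : ℕ, q0 ∉ G.W (n : Ordinal.{0})) ∧
      (∀ (a : G.M q0) (b : G.B q0 a), ∃ n : ℕ, G.o q0 a b ∈ G.W (n : Ordinal.{0})) ∧
      G.W Ordinal.omega0 ⊂ G.W (Ordinal.omega0 + 1) := by
  have hsucc : ∀ a b, ∃ n : ℕ, ladderGame.o none a b ∈ ladderGame.W n :=
    fun a i => ⟨i, ladderGame.o_none_mem_W a i⟩
  exact ⟨ladderGame, none, ladderGame.none_notMem_W, hsucc,
    ladderGame.W_omega0_ssubset_succ ladderGame.none_notMem_W hsucc⟩
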